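/- Define ψ: ℕ → ℝ by ψ(d) = 0 for d ∈ {0,1,2}, ψ(3) = 5/4, and ψ(d) = d/2 for d ≥ 4. Then for every finite simple graph G, s(G) ≤ (1/5) · Σ_{v ∈ V(G)} ψ(deg_G(v)). -/

import Mathlib

/-!
Induction on the number of non-isolated vertices, with the potential `∑ ψ(deg v)`.
If some vertex has degree 1 or 2, eliminate it (delete it and join its neighbours): every
`K₄` minor survives and no degree goes up, so a transversal of the smaller graph is one of `G`.
Otherwise every non-isolated vertex has degree at least 3. Put a vertex `v` of maximum degree `D`
into the transversal and delete it: the potential drops by `ψ(D)` at `v` and by at least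
`(5 - ψ(D)) / D` at each of its `D` neighbours, hence by at least `5`.
-/

open SimpleGraph

/-- `G` has a `K₄` minor (branch-set formulation: four nonempty, pairwise disjoint,
connected branch sets with an edge between every two of them). -/
def HasK4Minor {V : Type*} (G : SimpleGraph V) : Prop :=
  ∃ B : Fin 4 → Set V,
    (∀ i, (B i).Nonempty) ∧
    (∀ i, (G.induce (B i)).Connected) ∧
    (∀ i j, i ≠ j → Disjoint (B i) (B j)) ∧
    (∀ i j, i ≠ j → ∃ u ∈ B i, ∃ v ∈ B j, G.Adj u v)

/-- `X` is a transversal of `G`: the graph `G − X` has no `K₄` minor. -/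
def IsTransversal {V : Type*} (G : SimpleGraph V) (X : Finset V) : Prop :=
  ¬ HasK4Minor (G.induce ((↑X : Set V)ᶜ))

/-- `s(G)`: the minimum size of a transversal of `G`. -/
noncomputable def transNum {V : Type*} (G : SimpleGraph V) : ℕ :=
  sInf {n : ℕ | ∃ X : Finset V, X.card = n ∧ IsTransversal G X}

/-- The potential function: `ψ(d) = 0` for `d ∈ {0,1,2}`, `ψ(3) = 5/4`, and
`ψ(d) = d/2` for `d ≥ 4`. -/
noncomputable def psi (d : ℕ) : ℝ :=
  if d ≤ 2 then 0 else if d = 3 then 5 / 4 else (d : ℝ) / 2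

lemma psi_nonneg (d : ℕ) : 0 ≤ psi d := by
  unfold psi; split_ifs <;> positivity

lemma psi_of_le_two {d : ℕ} (h : d ≤ 2) : psi d = 0 := if_pos h

lemma psi_three : psi 3 = 5 / 4 := by norm_num [psi]

lemma psi_of_four_le {d : ℕ} (h : 4 ≤ d) : psi d = d / 2 := by
  rw [psi, if_neg (by omega), if_neg (by omega)]

lemma psi_mono : Monotone psi := by
  intro a b hab
  rcases (show a ≤ 2 ∨ a = 3 ∨ 4 ≤ a by omega) with ha | rfl | ha
  · exact psi_of_le_two ha ▸ psi_nonneg b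
  · rcases hab.eq_or_lt with rfl | hb
    · rfl
    · rw [psi_three, psi_of_four_le hb]
      have : (4 : ℝ) ≤ b := by exact_mod_cast hb
      linarith
  · rw [psi_of_four_le ha, psi_of_four_le (ha.trans hab)]
    gcongr

lemma psi_pred_add_le {a D : ℕ} (ha : 3 ≤ a) (haD : a ≤ D) :
    psi (a - 1) + (5 - psi D) / D ≤ psi a := by
  have hD : (0 : ℝ) < D := by norm_cast; omega
  rw [← le_sub_iff_add_le', div_le_iff₀ hD]
  have hincr : 1 / 2 ≤ psi a - psi (a - 1) := by
    rcases (show a = 3 ∨ a = 4 ∨ 5 ≤ a by omega) with rfl | rfl | ha5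
    · norm_num [psi_three, psi_of_le_two]
    · norm_num [psi_three, psi_of_four_le]
    · rw [psi_of_four_le (by omega), psi_of_four_le (by omega), Nat.cast_sub (by omega)]
      linarith
  rcases (show D = 3 ∨ D = 4 ∨ 5 ≤ D by omega) with rfl | rfl | hD5
  · obtain rfl : a = 3 := by omega
    norm_num [psi_three, psi_of_le_two]
  · rcases (show a = 3 ∨ a = 4 by omega) with rfl | rfl <;>
      norm_num [psi_three, psi_of_le_two, psi_of_four_le]
  · have : (5 : ℝ) ≤ D := by exact_mod_cast hD5
    rw [psi_of_four_le (by omega)]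
    nlinarith

namespace SimpleGraph

variable {V : Type*} {G : SimpleGraph V} {v : V}

/-- For `v` of degree at most 2 this is the suppression of `v`. -/
def eliminate (G : SimpleGraph V) (v : V) : SimpleGraph V where
  Adj a b := a ≠ v ∧ b ≠ v ∧ (G.Adj a b ∨ a ≠ b ∧ G.Adj v a ∧ G.Adj v b)
  symm := ⟨fun a b => by
    rintro ⟨ha, hb, h | ⟨hab, hva, hvb⟩⟩
    exacts [⟨hb, ha, .inl h.symm⟩, ⟨hb, ha, .inr ⟨hab.symm, hvb, hva⟩⟩]⟩
  loopless := ⟨fun a => by rintro ⟨-, -, h | ⟨h, -⟩⟩; exacts [h.ne rfl, h rfl]⟩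

lemma eliminate_adj {a b : V} :
    (G.eliminate v).Adj a b ↔ a ≠ v ∧ b ≠ v ∧ (G.Adj a b ∨ a ≠ b ∧ G.Adj v a ∧ G.Adj v b) :=
  Iff.rfl

theorem induce_eliminate (G : SimpleGraph V) {s : Set V} (hv : v ∈ s) :
    (G.eliminate v).induce s = (G.induce s).eliminate ⟨v, hv⟩ := by
  ext a b
  simp only [comap_adj, Function.Embedding.coe_subtype, eliminate_adj, ne_eq, Subtype.ext_iff]

theorem support_eliminate_subset (G : SimpleGraph V) (v : V) :
    (G.eliminate v).support ⊆ G.support \ {v} := by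
  rintro a ⟨b, hav, -, h | ⟨-, hva, -⟩⟩
  exacts [⟨h.left_mem_support, hav⟩, ⟨hva.right_mem_support, hav⟩]

theorem neighborSet_deleteIncidenceSet_of_ne {x : V} (hx : x ≠ v) :
    (G.deleteIncidenceSet v).neighborSet x = G.neighborSet x \ {v} := by
  ext y
  simp [deleteIncidenceSet_adj, hx]

theorem neighborSet_deleteIncidenceSet_self : (G.deleteIncidenceSet v).neighborSet v = ∅ := by
  ext y
  simp [deleteIncidenceSet_adj]

theorem Connected.induce_sdiff_singleton_eliminate {S : Set V} {z : V}
    (hS : (G.induce S).Connected) (hz : z ∈ S) (hzv : z ≠ v) :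
    ((G.eliminate v).induce (S \ {v})).Connected := by
  set K := (G.eliminate v).induce (S \ {v})
  -- `a'` stands for `a`, or for any neighbour of `v` while the walk sits at `v`: the
  -- neighbours of `v` are pairwise adjacent in `K`, so the walk can skip `v`.
  have key : ∀ {a b : S} (_ : (G.induce S).Walk a b) (hb : (b : V) ≠ v) (a' : ↥(S \ {v})),
      ((a' : V) = a ∨ (a : V) = v ∧ G.Adj v a') → K.Reachable a' ⟨b, b.2, hb⟩ := by
    intro a b p hb
    induction p with
    | @nil u =>
      rintro a' (h | ⟨h, -⟩)
      · rw [show a' = ⟨u, u.2, hb⟩ from Subtype.ext h]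
      · exact absurd h hb
    | @cons a c b hac q ih =>
      rintro a' ha'
      have hac : G.Adj a c := hac
      by_cases hc : (c : V) = v
      · have ha : (a' : V) = a := ha'.resolve_right fun h => hac.ne (h.1.trans hc.symm)
        exact ih hb a' (.inr ⟨hc, ha ▸ hc ▸ hac.symm⟩)
      refine Reachable.trans ?_ (ih hb ⟨c, c.2, hc⟩ (.inl rfl))
      by_cases ha'c : (a' : V) = c
      · rw [show a' = ⟨c, c.2, hc⟩ from Subtype.ext ha'c]
      refine Adj.reachable (show (G.eliminate v).Adj a' c from ⟨a'.2.2, hc, ?_⟩)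
      rcases ha' with ha' | ⟨hav, hva'⟩
      · exact .inl (ha' ▸ hac)
      · exact .inr ⟨ha'c, hva', hav ▸ hac⟩
  refine (connected_iff _).mpr ⟨?_, ⟨z, hz, hzv⟩⟩
  rintro ⟨x, hxS, hxv⟩ ⟨y, hyS, hyv⟩
  obtain ⟨p⟩ := hS.preconnected ⟨x, hxS⟩ ⟨y, hyS⟩
  exact key p hyv _ (.inl rfl)

section Fintype

variable [Fintype V]

theorem ncard_neighborSet_eliminate_le (hv : (G.neighborSet v).ncard ≤ 2) (x : V) :
    ((G.eliminate v).neighborSet x).ncard ≤ (G.neighborSet x).ncard := by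
  by_cases hvx : G.Adj v x
  · have hsub : (G.eliminate v).neighborSet x ⊆
        (G.neighborSet x \ {v}) ∪ (G.neighborSet v \ {x}) := by
      rintro y ⟨-, hyv, h | ⟨hxy, -, hvy⟩⟩
      exacts [.inl ⟨h, hyv⟩, .inr ⟨hvy, hxy.symm⟩]
    have hvN : v ∈ G.neighborSet x := hvx.symm
    have hxN : x ∈ G.neighborSet v := hvx
    have hx : 0 < (G.neighborSet x).ncard := (Set.ncard_pos (Set.toFinite _)).mpr ⟨v, hvN⟩
    calc _ ≤ ((G.neighborSet x \ {v}) ∪ (G.neighborSet v \ {x})).ncard := Set.ncard_le_ncard hsub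
      _ ≤ (G.neighborSet x \ {v}).ncard + (G.neighborSet v \ {x}).ncard := Set.ncard_union_le _ _
      _ ≤ _ := by
        rw [Set.ncard_sdiff_singleton_of_mem hvN, Set.ncard_sdiff_singleton_of_mem hxN]
        omega
  · exact Set.ncard_le_ncard fun y ⟨_, _, h⟩ => h.resolve_right fun h' => hvx h'.2.1

noncomputable def potential (G : SimpleGraph V) : ℝ := ∑ x, psi (G.neighborSet x).ncard

theorem potential_nonneg (G : SimpleGraph V) : 0 ≤ G.potential :=
  Finset.sum_nonneg fun _ _ => psi_nonneg _

theorem potential_eliminate_le (hv : (G.neighborSet v).ncard ≤ 2) :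
    (G.eliminate v).potential ≤ G.potential :=
  Finset.sum_le_sum fun x _ => psi_mono (ncard_neighborSet_eliminate_le hv x)

theorem potential_deleteIncidenceSet_add_five_le (hv : 3 ≤ (G.neighborSet v).ncard)
    (hmax : ∀ x, (G.neighborSet x).ncard ≤ (G.neighborSet v).ncard)
    (hnbr : ∀ x, G.Adj v x → 3 ≤ (G.neighborSet x).ncard) :
    (G.deleteIncidenceSet v).potential + 5 ≤ G.potential := by
  classical
  set D := (G.neighborSet v).ncard
  have hpoint : ∀ x, psi ((G.deleteIncidenceSet v).neighborSet x).ncard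
      + (if x = v then psi D else 0) + (if G.Adj v x then (5 - psi D) / D else 0)
      ≤ psi (G.neighborSet x).ncard := by
    intro x
    by_cases hxv : x = v
    · subst hxv
      simp [neighborSet_deleteIncidenceSet_self, psi_of_le_two, D]
    by_cases hvx : G.Adj v x
    · have hvN : v ∈ G.neighborSet x := hvx.symm
      rw [neighborSet_deleteIncidenceSet_of_ne hxv, Set.ncard_sdiff_singleton_of_mem hvN,
        if_neg hxv, if_pos hvx, add_zero]
      exact psi_pred_add_le (hnbr x hvx) (hmax x)
    · have : v ∉ G.neighborSet x := fun h => hvx h.symm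
      simp [neighborSet_deleteIncidenceSet_of_ne hxv, hxv, hvx, this]
  have hcard : (Finset.univ.filter (G.Adj v)).card = D := by
    rw [← Set.ncard_coe_finset]
    congr 1
    ext
    simp
  calc (G.deleteIncidenceSet v).potential + 5
      = ∑ x, (psi ((G.deleteIncidenceSet v).neighborSet x).ncard
          + (if x = v then psi D else 0) + (if G.Adj v x then (5 - psi D) / D else 0)) := by
        simp only [potential, Finset.sum_add_distrib, Finset.sum_ite_eq', Finset.mem_univ,
          if_true, Finset.sum_ite, Finset.sum_const_zero, Finset.sum_const, hcard, nsmul_eq_mul]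
        field_simp
        ring
    _ ≤ G.potential := Finset.sum_le_sum fun x _ => hpoint x

end Fintype

end SimpleGraph

section K4Minor

variable {W U : Type*} {H : SimpleGraph W}

theorem HasK4Minor.map {K : SimpleGraph U} (f : H →g K)
    (hf : Function.Injective f) (h : HasK4Minor H) : HasK4Minor K := by
  obtain ⟨B, hne, hconn, hdisj, hedge⟩ := h
  refine ⟨fun i => f '' B i, fun i => (hne i).image f, fun i => ?_,
    fun i j hij => (Set.disjoint_image_iff hf).mpr (hdisj i j hij), fun i j hij => ?_⟩
  · let g : H.induce (B i) →g K.induce (f '' B i) :=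
      ⟨fun x => ⟨f x, Set.mem_image_of_mem f x.2⟩, fun hxy => f.map_adj hxy⟩
    exact (hconn i).map g (by rintro ⟨_, x, hx, rfl⟩; exact ⟨⟨x, hx⟩, rfl⟩)
  · obtain ⟨x, hx, y, hy, hxy⟩ := hedge i j hij
    exact ⟨f x, Set.mem_image_of_mem f hx, f y, Set.mem_image_of_mem f hy, f.map_adj hxy⟩

theorem HasK4Minor.mono {K : SimpleGraph W} (hHK : H ≤ K) (h : HasK4Minor H) :
    HasK4Minor K :=
  h.map (Hom.ofLE hHK) Function.injective_id

theorem HasK4Minor.ne_bot (h : HasK4Minor H) : H ≠ ⊥ := by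
  obtain ⟨B, -, -, -, hedge⟩ := h
  obtain ⟨x, -, y, -, hxy⟩ := hedge 0 1 (by decide)
  exact ne_bot_iff_exists_adj.mpr ⟨x, y, hxy⟩

theorem HasK4Minor.eliminate {v : W} (h : HasK4Minor H)
    (hv : (H.neighborSet v).encard ≤ 2) : HasK4Minor (H.eliminate v) := by
  obtain ⟨B, hne, hconn, hdisj, hedge⟩ := h
  -- A branch set `{v}` would need a neighbour of `v` in each of the three other branch sets.
  have hz : ∀ i, ∃ z ∈ B i, z ≠ v := by
    intro i
    by_contra! hBi
    have hnbr : ∀ j : {j // j ≠ i}, ∃ y ∈ B j, H.Adj v y := fun j => by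
      obtain ⟨x, hx, y, hy, hxy⟩ := hedge i j (Ne.symm j.2)
      exact ⟨y, hy, hBi x hx ▸ hxy⟩
    choose y hyB hyv using hnbr
    have : ENat.card {j : Fin 4 // j ≠ i} ≤ ENat.card (H.neighborSet v) :=
      ENat.card_le_card_of_injective (f := fun j => (⟨y j, hyv j⟩ : H.neighborSet v))
        fun j k hjk => by
          by_contra hjk'
          exact (hdisj j k fun h => hjk' (Subtype.ext h)).ne_of_mem (hyB j) (hyB k)
            (congrArg Subtype.val hjk)
    simp only [ne_eq, ENat.card_eq_coe_fintype_card, Fintype.card_subtype_compl, Fintype.card_fin,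
      Fintype.card_unique, Nat.add_one_sub_one, Nat.cast_ofNat, ENat.card_coe_set_eq] at this
    exact absurd (this.trans hv) (by norm_num)
  have step : ∀ i j, i ≠ j → ∀ x ∈ B i, ∀ y ∈ B j, H.Adj x y → y ≠ v →
      ∃ x' ∈ B i \ {v}, (H.eliminate v).Adj x' y := by
    intro i j hij x hx y hy hxy hyv
    by_cases hxv : x = v
    · subst hxv
      obtain ⟨z, hz, hzx⟩ := hz i
      have : Nontrivial (B i) :=
        nontrivial_of_ne ⟨x, hx⟩ ⟨z, hz⟩ fun h => hzx (congrArg Subtype.val h).symm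
      obtain ⟨⟨u, hu⟩, hxu⟩ := (hconn i).preconnected.exists_adj_of_nontrivial ⟨x, hx⟩
      replace hxu : H.Adj x u := hxu
      exact ⟨u, ⟨hu, hxu.ne'⟩, hxu.ne', hyv, .inr ⟨(hdisj i j hij).ne_of_mem hu hy, hxu, hxy⟩⟩
    · exact ⟨x, ⟨hx, hxv⟩, hxv, hyv, .inl hxy⟩
  refine ⟨fun i => B i \ {v}, fun i => ?_, fun i => ?_, fun i j hij => ?_, fun i j hij => ?_⟩
  · obtain ⟨z, hz, hzv⟩ := hz i
    exact ⟨z, hz, hzv⟩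
  · obtain ⟨z, hz, hzv⟩ := hz i
    exact (hconn i).induce_sdiff_singleton_eliminate hz hzv
  · exact (hdisj i j hij).mono Set.sdiff_subset Set.sdiff_subset
  · obtain ⟨x, hx, y, hy, hxy⟩ := hedge i j hij
    by_cases hyv : y = v
    · have hxv : x ≠ v := hyv ▸ hxy.ne
      obtain ⟨y', hy', hy'x⟩ := step j i hij.symm y hy x hx hxy.symm hxv
      exact ⟨x, ⟨hx, hxv⟩, y', hy', hy'x.symm⟩
    · obtain ⟨x', hx', hx'y⟩ := step i j hij x hx y hy hxy hyv
      exact ⟨x', hx', y, ⟨hy, hyv⟩, hx'y⟩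

end K4Minor

section Transversal

variable {V : Type*} {G : SimpleGraph V} {v : V} {X : Finset V}

theorem isTransversal_bot (X : Finset V) : IsTransversal (⊥ : SimpleGraph V) X :=
  fun h => h.ne_bot (induce_bot _)

theorem IsTransversal.of_eliminate
    (hX : IsTransversal (G.eliminate v) X) (hv : (G.neighborSet v).encard ≤ 2) :
    IsTransversal G X := by
  intro h
  by_cases hvX : v ∈ X
  · have hvX : v ∈ (↑X : Set V) := hvX
    exact hX (h.mono fun a b hab =>
      ⟨(ne_of_mem_of_not_mem hvX a.2).symm, (ne_of_mem_of_not_mem hvX b.2).symm, .inl hab⟩)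
  · rw [IsTransversal, induce_eliminate G (s := (↑X)ᶜ) hvX] at hX
    refine hX (h.eliminate (le_trans ?_ hv))
    rw [neighborSet_induce]
    exact Set.encard_preimage_val_le_encard_right _ _

theorem IsTransversal.insert_of_deleteIncidenceSet [DecidableEq V]
    (hX : IsTransversal (G.deleteIncidenceSet v) X) :
    IsTransversal G (insert v X) := by
  intro h
  have hsub : (↑(insert v X) : Set V)ᶜ ⊆ (↑X)ᶜ :=
    Set.compl_subset_compl.mpr (Finset.coe_subset.mpr (Finset.subset_insert v X))
  rw [← induce_deleteIncidenceSet_of_notMem G (by simp : v ∉ (↑(insert v X) : Set V)ᶜ)] at h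
  let e := induceHomOfLE (G.deleteIncidenceSet v) hsub
  exact hX (h.map e.toHom e.injective)

theorem exists_isTransversal_five_mul_card_le_potential [Fintype V] (G : SimpleGraph V) :
    ∃ X : Finset V, IsTransversal G X ∧ 5 * (X.card : ℝ) ≤ G.potential := by
  classical
  induction hn : G.support.ncard using Nat.strong_induction_on generalizing G with
  | _ n ih =>
  subst hn
  have descend : ∀ v ∈ G.support, ∀ G' : SimpleGraph V, G'.support ⊆ G.support \ {v} →
      ∃ X : Finset V, IsTransversal G' X ∧ 5 * (X.card : ℝ) ≤ G'.potential := fun v hv G' hG' =>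
    ih _ ((Set.ncard_le_ncard hG').trans_lt (Set.ncard_sdiff_singleton_lt_of_mem hv)) G' rfl
  have hpos : ∀ x, 0 < (G.neighborSet x).ncard ↔ x ∈ G.support :=
    fun x => Set.ncard_pos (Set.toFinite _)
  rcases eq_or_ne G ⊥ with rfl | hG
  · exact ⟨∅, isTransversal_bot ∅, by simpa using potential_nonneg ⊥⟩
  by_cases hsmall : ∃ v, 0 < (G.neighborSet v).ncard ∧ (G.neighborSet v).ncard ≤ 2
  · obtain ⟨v, hv₀, hv⟩ := hsmall
    obtain ⟨X, hX, hXG⟩ := descend v ((hpos v).mp hv₀) _ (support_eliminate_subset G v)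
    exact ⟨X, hX.of_eliminate (Set.encard_le_coe_iff_finite_ncard_le.mpr ⟨Set.toFinite _, hv⟩),
      hXG.trans (potential_eliminate_le hv)⟩
  push Not at hsmall
  have h3 : ∀ x ∈ G.support, 3 ≤ (G.neighborSet x).ncard :=
    fun x hx => hsmall x ((hpos x).mpr hx)
  obtain ⟨a, b, hab⟩ := ne_bot_iff_exists_adj.mp hG
  have : Nonempty V := ⟨a⟩
  obtain ⟨v, hmax⟩ := Finite.exists_max fun x => (G.neighborSet x).ncard
  have hv : v ∈ G.support := (hpos v).mp (((hpos a).mpr hab.left_mem_support).trans_le (hmax a))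
  obtain ⟨X, hX, hXG⟩ := descend v hv _ (support_deleteIncidenceSet_subset G v)
  have hcard : ((insert v X).card : ℝ) ≤ X.card + 1 := by exact_mod_cast Finset.card_insert_le v X
  have := potential_deleteIncidenceSet_add_five_le (h3 v hv) hmax
    fun x hx => h3 x hx.right_mem_support
  exact ⟨insert v X, hX.insert_of_deleteIncidenceSet, by linarith⟩

end Transversal

theorem statement16 {V : Type*} [Fintype V] (G : SimpleGraph V) :
    (transNum G : ℝ) ≤ (1 / 5) * ∑ v : V, psi ((G.neighborSet v).ncard) := by
  obtain ⟨X, hX, hXG⟩ := exists_isTransversal_five_mul_card_le_potential G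
  have hmin : transNum G ≤ X.card := Nat.sInf_le ⟨X, rfl, hX⟩
  have : (transNum G : ℝ) ≤ X.card := by exact_mod_cast hmin
  rw [SimpleGraph.potential] at hXG
  linarith
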